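/- arXiv:1406.6257 — 2 statements merged into one kernel-verified Lean document; each statement's English description precedes it below -/
import Mathlib

section
/- Let 𝖧 be a real Hilbert space, for i ∈ {1,…,m} let 𝖠ᵢ : 𝖧 → 2^𝖧 be maximally monotone, let 𝖡 : 𝖧 → 𝖧 be monotone and χ-Lipschitzian, and let ω₁,…,ω_m ∈ (0,1] with Σᵢ ωᵢ = 1. Let H be the Hilbert space 𝖧^m with inner product ⟨x, y⟩ = Σᵢ ωᵢ ⟨xᵢ, yᵢ⟩, and define V = {(x₁,…,x_m) ∈ H : x₁ = ⋯ = x_m}, j : 𝖧 → H : x ↦ (x,…,x), A : H → 2^H : (x₁,…,x_m) ↦ (1/ω₁)𝖠₁x₁ × ⋯ × (1/ω_m)𝖠_m x_m, and B : H → H : (x₁,…,x_m) ↦ (𝖡x₁,…,𝖡x_m). Then, for every x ∈ 𝖧, one has 0 ∈ Σᵢ₌₁^m 𝖠ᵢ x + 𝖡x if and only if j(x) ∈ zer(A + B + N_V). -/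
/-!
Write a point of `A (j x) + B (j x)` as `a + j (B x)`. The normal cone to the diagonal at `j x`
consists of the `n` with `Σᵢ ωᵢ nᵢ = 0` (pair `n` with `j (Σᵢ ωᵢ nᵢ)`), so `j x` is a zero of
`A + B + N_V` exactly when `Σᵢ ωᵢ aᵢ + B x = 0` for some `aᵢ ∈ ωᵢ⁻¹ Aᵢ x`, using `Σᵢ ωᵢ = 1`.
The substitution `gᵢ = ωᵢ aᵢ` turns this into `0 ∈ Σᵢ Aᵢ x + B x`.
-/

open scoped Pointwise RealInnerProductSpace
open Finset

noncomputable section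

variable {E : Type*} [NormedAddCommGroup E] [InnerProductSpace ℝ E] [CompleteSpace E]
  {m : ℕ}

def MonotoneSV (A : E → Set E) : Prop :=
  ∀ ⦃x y u v : E⦄, u ∈ A x → v ∈ A y → 0 ≤ ⟪x - y, u - v⟫

def MaxMonotone (A : E → Set E) : Prop :=
  MonotoneSV A ∧ ∀ x u : E, (∀ y v, v ∈ A y → 0 ≤ ⟪x - y, u - v⟫) → u ∈ A x

def diagSub (E : Type*) (m : ℕ) : Set (Fin m → E) := {x | ∀ i j, x i = x j}

/-- `V⊥` for the weighted inner product `⟨x, y⟩ = Σᵢ ωᵢ ⟨xᵢ, yᵢ⟩` on `E^m`. -/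
def diagOrth (ω : Fin m → ℝ) : Set (Fin m → E) :=
  {u | ∀ v ∈ diagSub E m, ∑ i, ω i * ⟪v i, u i⟫ = 0}

/-- `N_V`. -/
def diagNormalCone (ω : Fin m → ℝ) : (Fin m → E) → Set (Fin m → E) := fun x =>
  {u | x ∈ diagSub E m ∧ u ∈ diagOrth ω}

def jmap (m : ℕ) (x : E) : Fin m → E := fun _ => x

def prodOp (A : Fin m → E → Set E) (ω : Fin m → ℝ) :
    (Fin m → E) → Set (Fin m → E) := fun x =>
  {u | ∀ i, u i ∈ (ω i)⁻¹ • A i (x i)}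

def prodB (B : E → E) : (Fin m → E) → (Fin m → E) := fun x i => B (x i)

theorem zero_mem_add_iff_exists_neg_mem {α : Type*} [AddGroup α] {s t : Set α} :
    (0 : α) ∈ s + t ↔ ∃ a ∈ s, -a ∈ t := by
  constructor
  · rintro ⟨a, ha, b, hb, hab⟩
    exact ⟨a, ha, by rwa [neg_eq_of_add_eq_zero_right hab]⟩
  · rintro ⟨a, ha, hna⟩
    exact ⟨a, ha, -a, hna, add_neg_cancel a⟩

theorem zero_mem_add_singleton_iff {α : Type*} [AddGroup α] {s : Set α} {b : α} :
    (0 : α) ∈ s + {b} ↔ -b ∈ s := by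
  simp only [zero_mem_add_iff_exists_neg_mem, Set.mem_singleton_iff, neg_eq_iff_eq_neg,
    exists_eq_right]

theorem diagSub_eq_range_jmap {α : Type*} [Nonempty α] :
    diagSub α m = Set.range (jmap m) := by
  ext v
  refine ⟨fun hv => ?_, ?_⟩
  · cases m with
    | zero => exact ⟨Classical.arbitrary α, Subsingleton.elim _ _⟩
    | succ m => exact ⟨v 0, funext fun i => hv 0 i⟩
  · rintro ⟨y, rfl⟩ i j
    rfl

section

variable {F : Type*} [NormedAddCommGroup F] [InnerProductSpace ℝ F]

theorem sum_mul_inner_jmap (ω : Fin m → ℝ) (y : F) (u : Fin m → F) :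
    ∑ i, ω i * ⟪jmap m y i, u i⟫ = ⟪y, ∑ i, ω i • u i⟫ := by
  simp only [jmap, inner_sum, inner_smul_right]

theorem mem_diagOrth_iff {ω : Fin m → ℝ} {u : Fin m → F} :
    u ∈ diagOrth ω ↔ ∑ i, ω i • u i = 0 := by
  simp only [diagOrth, diagSub_eq_range_jmap, Set.forall_mem_range, Set.mem_ofPred_eq,
    sum_mul_inner_jmap]
  exact ⟨fun h => inner_self_eq_zero.1 (h _), fun h y => by rw [h, inner_zero_right]⟩

theorem mem_diagNormalCone_jmap_iff {ω : Fin m → ℝ} {x : F} {u : Fin m → F} :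
    u ∈ diagNormalCone ω (jmap m x) ↔ ∑ i, ω i • u i = 0 :=
  ⟨fun h => mem_diagOrth_iff.1 h.2,
    fun h => ⟨fun _ _ => rfl, mem_diagOrth_iff.2 h⟩⟩

theorem mem_prodOp_jmap_iff {A : Fin m → F → Set F} {ω : Fin m → ℝ} (hω : ∀ i, ω i ≠ 0)
    {x : F} {a : Fin m → F} :
    a ∈ prodOp A ω (jmap m x) ↔ ∀ i, ω i • a i ∈ A i x :=
  forall_congr' fun i => Set.mem_inv_smul_set_iff₀ (hω i) _ _

theorem sum_smul_add_prodB_jmap {ω : Fin m → ℝ} (hω1 : ∑ i, ω i = 1) (B : F → F) (x : F)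
    (a : Fin m → F) :
    ∑ i, ω i • (a + prodB B (jmap m x)) i = ∑ i, ω i • a i + B x := by
  simp only [Pi.add_apply, prodB, jmap, smul_add, sum_add_distrib, ← sum_smul, hω1, one_smul]

theorem zero_mem_prodOp_add_prodB_add_diagNormalCone_iff {A : Fin m → F → Set F} {B : F → F}
    {ω : Fin m → ℝ} (hω : ∀ i, ω i ≠ 0) (hω1 : ∑ i, ω i = 1) (x : F) :
    (0 : Fin m → F) ∈ prodOp A ω (jmap m x) + {prodB B (jmap m x)} + diagNormalCone ω (jmap m x)
      ↔ ∃ a : Fin m → F, (∀ i, ω i • a i ∈ A i x) ∧ ∑ i, ω i • a i = -B x := by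
  simp only [zero_mem_add_iff_exists_neg_mem, mem_diagNormalCone_jmap_iff, Pi.neg_apply,
    smul_neg, sum_neg_distrib, neg_eq_zero]
  constructor
  · rintro ⟨_, ⟨a, ha, _, rfl, rfl⟩, hsum⟩
    rw [sum_smul_add_prodB_jmap hω1, ← eq_neg_iff_add_eq_zero] at hsum
    exact ⟨a, (mem_prodOp_jmap_iff hω).1 ha, hsum⟩
  · rintro ⟨a, ha, hsum⟩
    refine ⟨a + prodB B (jmap m x), Set.add_mem_add ((mem_prodOp_jmap_iff hω).2 ha) rfl, ?_⟩
    rw [sum_smul_add_prodB_jmap hω1, hsum, neg_add_cancel]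

end

theorem stmt10_general (A : Fin m → E → Set E) (B : E → E)
    (ω : Fin m → ℝ) (hω : ∀ i, ω i ∈ Set.Ioc (0 : ℝ) 1) (hω1 : ∑ i, ω i = 1) :
    ∀ x : E,
      ((0 : E) ∈ (∑ i, A i x) + {B x}) ↔
      ((0 : Fin m → E) ∈ prodOp A ω (jmap m x) + {prodB B (jmap m x)}
          + diagNormalCone ω (jmap m x)) := by
  intro x
  have hω0 : ∀ i, ω i ≠ 0 := fun i => (hω i).1.ne'
  rw [zero_mem_add_singleton_iff, Set.mem_fintype_sum,
    zero_mem_prodOp_add_prodB_add_diagNormalCone_iff hω0 hω1]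
  constructor
  · rintro ⟨g, hg, hsum⟩
    have hg' : ∀ i, ω i • (ω i)⁻¹ • g i = g i := fun i => smul_inv_smul₀ (hω0 i) _
    exact ⟨fun i => (ω i)⁻¹ • g i, by simpa only [hg'] using hg, by simpa only [hg'] using hsum⟩
  · rintro ⟨a, ha, hsum⟩
    exact ⟨fun i => ω i • a i, ha, hsum⟩

theorem stmt10 (A : Fin m → E → Set E) (B : E → E) (χ : ℝ)
    (hA : ∀ i, MaxMonotone (A i))
    (hBmono : ∀ x y : E, 0 ≤ ⟪x - y, B x - B y⟫)
    (hBlip : ∀ x y : E, ‖B x - B y‖ ≤ χ * ‖x - y‖)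
    (ω : Fin m → ℝ) (hω : ∀ i, ω i ∈ Set.Ioc (0 : ℝ) 1) (hω1 : ∑ i, ω i = 1) :
    ∀ x : E,
      ((0 : E) ∈ (∑ i, A i x) + {B x}) ↔
      ((0 : Fin m → E) ∈ prodOp A ω (jmap m x) + {prodB B (jmap m x)}
          + diagNormalCone ω (jmap m x)) :=
  stmt10_general A B ω hω hω1
end
end

section
/- Let 𝖧 be a real Hilbert space, let 𝖵 be a closed vector subspace of 𝖧, and let 𝖣 : 𝖧 → 𝖧 be β-strongly monotone and ν-cocoercive for some β, ν > 0. Then the partial inverse 𝖣_𝖵 is an everywhere defined single-valued operator that is α-cocoercive and α-strongly monotone with α = min{β, ν}/2; in particular, 𝖣_𝖵 is (1/α)-Lipschitzian. -/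
/-!
Write `M(a, b) = P_V a + P_{V⊥} b` (`orthoMix V a b`). By definition the graph of `D_V` is the
image of the graph of `D` under `(u, d) ↦ (M(u, d), M(d, u))`, and this map preserves both the
pairing `⟪u, d⟫` and `‖u‖² + ‖d‖²`. So for `x = M(u, D u)` and `y = M(v, D v)`,
`⟪x - y, D_V x - D_V y⟫ = ⟪u - v, D u - D v⟫ ≥ (β ‖u - v‖² + ν ‖D u - D v‖²) / 2
  ≥ α (‖x - y‖² + ‖D_V x - D_V y‖²)`.
That `D_V` is single-valued and everywhere defined means `u ↦ M(u, D u)` is bijective: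
injectivity is strong monotonicity, and a preimage of `x` is the fixed point of the contraction
`u ↦ M(x, u - ν (D u - x))`, contracting because `u ↦ u - ν D u` is `√(1 - ν β)`-Lipschitz.
-/

open scoped Pointwise RealInnerProductSpace

noncomputable section

variable {E : Type*} [NormedAddCommGroup E] [InnerProductSpace ℝ E] [CompleteSpace E]

def partialInv (V : Submodule ℝ E) [V.HasOrthogonalProjection] (A : E → Set E) :
    E → Set E := fun x =>
  {y | (V.orthogonalProjectionOnto y : E) + (Submodule.orthogonalProjectionOnto Vᗮ x : E)
      ∈ A ((V.orthogonalProjectionOnto x : E) + (Submodule.orthogonalProjectionOnto Vᗮ y : E))}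

section

variable {H : Type*} [NormedAddCommGroup H] [InnerProductSpace ℝ H]

def IsStronglyMonotone (β : ℝ) (T : H → H) : Prop :=
  ∀ x y, β * ‖x - y‖ ^ 2 ≤ ⟪x - y, T x - T y⟫

def IsCocoercive (ν : ℝ) (T : H → H) : Prop :=
  ∀ x y, ν * ‖T x - T y‖ ^ 2 ≤ ⟪x - y, T x - T y⟫

theorem IsCocoercive.norm_sub_le {ν : ℝ} {T : H → H} (hT : IsCocoercive ν T) (hν : 0 < ν)
    (x y : H) : ‖T x - T y‖ ≤ ν⁻¹ * ‖x - y‖ := by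
  have h : ν * ‖T x - T y‖ * ‖T x - T y‖ ≤ ‖x - y‖ * ‖T x - T y‖ := by
    nlinarith [hT x y, real_inner_le_norm (x - y) (T x - T y)]
  rw [le_inv_mul_iff₀ hν]
  rcases (norm_nonneg (T x - T y)).eq_or_lt with h0 | hpos
  · rw [← h0, mul_zero]
    exact norm_nonneg _
  · exact le_of_mul_le_mul_right h hpos

theorem IsStronglyMonotone.norm_sub_smul_sub_sq_le {β ν : ℝ} {D : H → H}
    (hβ : IsStronglyMonotone β D) (hν : IsCocoercive ν D) (hν0 : 0 ≤ ν) (x y : H) :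
    ‖(x - ν • D x) - (y - ν • D y)‖ ^ 2 ≤ (1 - ν * β) * ‖x - y‖ ^ 2 := by
  have hsplit : (x - ν • D x) - (y - ν • D y) = (x - y) - ν • (D x - D y) := by module
  rw [hsplit, norm_sub_sq_real, real_inner_smul_right, norm_smul, Real.norm_of_nonneg hν0]
  nlinarith [mul_le_mul_of_nonneg_left (hβ x y) hν0, mul_le_mul_of_nonneg_left (hν x y) hν0]

variable (V : Submodule ℝ H) [V.HasOrthogonalProjection]

def orthoMix (a b : H) : H := V.starProjection a + Vᗮ.starProjection b

theorem starProjection_orthoMix (a b : H) :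
    V.starProjection (orthoMix V a b) = V.starProjection a := by
  rw [orthoMix, map_add, Submodule.starProjection_eq_self_iff.mpr (V.starProjection_apply_mem a),
    (V.starProjection_apply_eq_zero_iff).mpr (Vᗮ.starProjection_apply_mem b), add_zero]

theorem starProjection_orthogonal_orthoMix (a b : H) :
    Vᗮ.starProjection (orthoMix V a b) = Vᗮ.starProjection b := by
  rw [orthoMix, map_add, Submodule.starProjection_orthogonal_apply_eq_zero
    (V.starProjection_apply_mem a),
    Submodule.starProjection_eq_self_iff.mpr (Vᗮ.starProjection_apply_mem b), zero_add]

theorem orthoMix_self (a : H) : orthoMix V a a = a :=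
  V.starProjection_add_starProjection_orthogonal a

theorem orthoMix_orthoMix (a b c d : H) :
    orthoMix V (orthoMix V a b) (orthoMix V c d) = orthoMix V a d := by
  rw [orthoMix, starProjection_orthoMix, starProjection_orthogonal_orthoMix, orthoMix]

theorem orthoMix_sub (a b c d : H) :
    orthoMix V (a - c) (b - d) = orthoMix V a b - orthoMix V c d := by
  simp only [orthoMix, map_sub]
  abel

theorem inner_orthoMix_orthoMix (a b c d : H) :
    ⟪orthoMix V a b, orthoMix V c d⟫ =
      ⟪V.starProjection a, V.starProjection c⟫ + ⟪Vᗮ.starProjection b, Vᗮ.starProjection d⟫ := by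
  have hVW : ⟪V.starProjection a, Vᗮ.starProjection d⟫ = 0 :=
    Submodule.inner_right_of_mem_orthogonal (V.starProjection_apply_mem a)
      (Vᗮ.starProjection_apply_mem d)
  have hWV : ⟪Vᗮ.starProjection b, V.starProjection c⟫ = 0 :=
    Submodule.inner_left_of_mem_orthogonal (V.starProjection_apply_mem c)
      (Vᗮ.starProjection_apply_mem b)
  rw [orthoMix, orthoMix, inner_add_left, inner_add_right, inner_add_right, hVW, hWV]
  ring

theorem inner_orthoMix_swap (a b : H) : ⟪orthoMix V a b, orthoMix V b a⟫ = ⟪a, b⟫ := by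
  conv_rhs => rw [← orthoMix_self V a, ← orthoMix_self V b]
  rw [inner_orthoMix_orthoMix, inner_orthoMix_orthoMix, real_inner_comm (Vᗮ.starProjection a)]

theorem norm_sq_orthoMix_add_norm_sq_orthoMix_swap (a b : H) :
    ‖orthoMix V a b‖ ^ 2 + ‖orthoMix V b a‖ ^ 2 = ‖a‖ ^ 2 + ‖b‖ ^ 2 := by
  conv_rhs => rw [← orthoMix_self V a, ← orthoMix_self V b]
  simp only [← real_inner_self_eq_norm_sq, inner_orthoMix_orthoMix]
  ring

theorem norm_orthoMix_sub_orthoMix_le (a b c : H) :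
    ‖orthoMix V a b - orthoMix V a c‖ ≤ ‖b - c‖ := by
  rw [← orthoMix_sub, sub_self, orthoMix, map_zero, zero_add]
  exact Vᗮ.norm_starProjection_apply_le _

theorem mem_partialInv_iff (D : H → H) (x y : H) :
    y ∈ partialInv V (fun w => {D w}) x ↔
      ∃ u, orthoMix V u (D u) = x ∧ orthoMix V (D u) u = y := by
  change orthoMix V y x = D (orthoMix V x y) ↔ _
  constructor
  · intro h
    refine ⟨orthoMix V x y, ?_, ?_⟩
    · rw [← h, orthoMix_orthoMix, orthoMix_self]
    · rw [← h, orthoMix_orthoMix, orthoMix_self]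
  · rintro ⟨u, rfl, rfl⟩
    rw [orthoMix_orthoMix, orthoMix_orthoMix, orthoMix_self, orthoMix_self]

theorem inner_orthoMix_graph_sub (D : H → H) (u v : H) :
    ⟪orthoMix V u (D u) - orthoMix V v (D v), orthoMix V (D u) u - orthoMix V (D v) v⟫ =
      ⟪u - v, D u - D v⟫ := by
  rw [← orthoMix_sub, ← orthoMix_sub, inner_orthoMix_swap]

theorem IsStronglyMonotone.min_mul_le_inner_orthoMix_graph {β ν : ℝ} {D : H → H}
    (hβ : IsStronglyMonotone β D) (hν : IsCocoercive ν D) (u v : H) :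
    min β ν / 2 * (‖orthoMix V u (D u) - orthoMix V v (D v)‖ ^ 2 +
        ‖orthoMix V (D u) u - orthoMix V (D v) v‖ ^ 2) ≤
      ⟪orthoMix V u (D u) - orthoMix V v (D v), orthoMix V (D u) u - orthoMix V (D v) v⟫ := by
  rw [inner_orthoMix_graph_sub, ← orthoMix_sub, ← orthoMix_sub,
    norm_sq_orthoMix_add_norm_sq_orthoMix_swap]
  nlinarith [hβ u v, hν u v, mul_nonneg (sub_nonneg.mpr (min_le_left β ν)) (sq_nonneg ‖u - v‖),
    mul_nonneg (sub_nonneg.mpr (min_le_right β ν)) (sq_nonneg ‖D u - D v‖)]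

theorem IsStronglyMonotone.injective_orthoMix_graph {β : ℝ} {D : H → H}
    (hβ : IsStronglyMonotone β D) (hβ0 : 0 < β) :
    Function.Injective fun u => orthoMix V u (D u) := by
  intro u v (huv : orthoMix V u (D u) = orthoMix V v (D v))
  have h := hβ u v
  rw [← inner_orthoMix_graph_sub V, huv, sub_self, inner_zero_left] at h
  have : ‖u - v‖ ^ 2 ≤ 0 := nonpos_of_mul_nonpos_right h hβ0
  simpa [sub_eq_zero] using this

theorem IsStronglyMonotone.exists_orthoMix_graph_eq [CompleteSpace H] {β ν : ℝ} {D : H → H}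
    (hβ : IsStronglyMonotone β D) (hν : IsCocoercive ν D) (hβ0 : 0 < β) (hν0 : 0 < ν) (x : H) :
    ∃ u, orthoMix V u (D u) = x := by
  set G : H → H := fun u => orthoMix V x (u - ν • (D u - x)) with hG
  set K : NNReal := ⟨√(1 - ν * β), Real.sqrt_nonneg _⟩
  have hK : K < 1 := by
    change √(1 - ν * β) < 1
    rw [Real.sqrt_lt' one_pos]
    nlinarith [mul_pos hν0 hβ0]
  have hGK : ContractingWith K G := by
    refine ⟨hK, LipschitzWith.of_dist_le_mul fun u v => ?_⟩
    have hstep : ‖(u - ν • D u) - (v - ν • D v)‖ ≤ √(1 - ν * β) * ‖u - v‖ := by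
      rw [← Real.sqrt_sq (norm_nonneg (u - v)), ← Real.sqrt_mul' _ (sq_nonneg _)]
      exact Real.le_sqrt_of_sq_le (hβ.norm_sub_smul_sub_sq_le hν hν0.le u v)
    calc dist (G u) (G v) ≤ ‖(u - ν • (D u - x)) - (v - ν • (D v - x))‖ :=
          (dist_eq_norm _ _).trans_le (norm_orthoMix_sub_orthoMix_le V _ _ _)
      _ = ‖(u - ν • D u) - (v - ν • D v)‖ := by congr 1; module
      _ ≤ K * dist u v := by rw [dist_eq_norm]; exact hstep
  set u := ContractingWith.fixedPoint G hGK
  have hu : G u = u := ContractingWith.fixedPoint_isFixedPt hGK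
  have hperp : Vᗮ.starProjection (D u) = Vᗮ.starProjection x := by
    have h := congrArg Vᗮ.starProjection hu
    rw [hG, starProjection_orthogonal_orthoMix, map_sub, map_smul, map_sub, sub_eq_self,
      smul_eq_zero, sub_eq_zero] at h
    exact h.resolve_left hν0.ne'
  refine ⟨u, ?_⟩
  calc orthoMix V u (D u) = orthoMix V (G u) (D u) := by rw [hu]
    _ = orthoMix V x x := by rw [orthoMix, hG, starProjection_orthoMix, hperp, orthoMix]
    _ = x := orthoMix_self V x

end

theorem stmt12 (V : Submodule ℝ E) [CompleteSpace V] (D : E → E) (β ν : ℝ)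
    (hβ : 0 < β) (hν : 0 < ν)
    (hstrong : ∀ x y : E, β * ‖x - y‖ ^ 2 ≤ ⟪x - y, D x - D y⟫)
    (hcoco : ∀ x y : E, ν * ‖D x - D y‖ ^ 2 ≤ ⟪x - y, D x - D y⟫) :
    ∃ T : E → E,
      (∀ x : E, partialInv V (fun w => {D w}) x = {T x}) ∧
      (∀ x y : E, min β ν / 2 * ‖T x - T y‖ ^ 2 ≤ ⟪x - y, T x - T y⟫) ∧
      (∀ x y : E, min β ν / 2 * ‖x - y‖ ^ 2 ≤ ⟪x - y, T x - T y⟫) ∧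
      (∀ x y : E, ‖T x - T y‖ ≤ (min β ν / 2)⁻¹ * ‖x - y‖) := by
  have hα : 0 < min β ν / 2 := by positivity
  choose g hg using IsStronglyMonotone.exists_orthoMix_graph_eq V hstrong hcoco hβ hν
  set T : E → E := fun x => orthoMix V (D (g x)) (g x)
  have key : ∀ x y, min β ν / 2 * (‖x - y‖ ^ 2 + ‖T x - T y‖ ^ 2) ≤ ⟪x - y, T x - T y⟫ :=
    fun x y => by
      simpa only [hg] using
        IsStronglyMonotone.min_mul_le_inner_orthoMix_graph V hstrong hcoco (g x) (g y)
  have hcocoT : IsCocoercive (min β ν / 2) T := fun x y => by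
    nlinarith [key x y, mul_nonneg hα.le (sq_nonneg ‖x - y‖)]
  refine ⟨T, fun x => ?_, hcocoT, fun x y => ?_, hcocoT.norm_sub_le hα⟩
  · ext y
    rw [mem_partialInv_iff, Set.mem_singleton_iff]
    constructor
    · rintro ⟨u, hux, rfl⟩
      rw [IsStronglyMonotone.injective_orthoMix_graph V hstrong hβ (hux.trans (hg x).symm)]
    · rintro rfl
      exact ⟨g x, hg x, rfl⟩
  · nlinarith [key x y, mul_nonneg hα.le (sq_nonneg ‖T x - T y‖)]
end
end
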